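/- arXiv:2109.15148 — 2 statements merged into one kernel-verified Lean document; each statement's English description precedes it below -/
import Mathlib

section
/- Let d, a, x, w, y, b ∈ V be pairwise distinct vertices such that da, ax, xw, wy, yb, bd are all edges of G_p (so they form a 6-cycle). Then d₁²·a₁ + d₁²·w₁ − d₁·a₁·x₁ − d₁·a₁·y₁ + d₁·x₁·w₁ + d₁·w₁·y₁ − a₁·x₁² − a₁·x₁·y₁ − a₁·y₁² + x₁²·w₁ + x₁·w₁·y₁ − w₁·y₁² = 0 in F_p. -/
/-- The set `S ⊆ F_p` of elements whose least nonnegative representative `k`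
satisfies `1 ≤ k ≤ (p-5)/6` and `k ≡ 1 (mod 3)`. -/
def Svertex (p : ℕ) : Set (ZMod p) :=
  {x | 1 ≤ x.val ∧ x.val ≤ (p - 5) / 6 ∧ x.val % 3 = 1}

/-- The vertex set `V = S × F_p × F_p` of the graph `G_p`. -/
def Vsub (p : ℕ) : Type :=
  {v : ZMod p × ZMod p × ZMod p // v.1 ∈ Svertex p}

/-- The graph `G_p` on `V = S × F_p × F_p`: distinct vertices `x, y` are adjacent iff
`x₂ + y₃ = x₁·y₁²` and `x₃ + y₂ = x₁²·y₁`. -/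
def Gp (p : ℕ) : SimpleGraph (Vsub p) where
  Adj x y := x ≠ y ∧ x.val.2.1 + y.val.2.2 = x.val.1 * y.val.1 ^ 2 ∧
    x.val.2.2 + y.val.2.1 = x.val.1 ^ 2 * y.val.1
  symm := by
    constructor
    rintro x y ⟨hne, h1, h2⟩
    exact ⟨hne.symm, by linear_combination h2, by linear_combination h1⟩
  loopless := ⟨fun x h => h.1 rfl⟩

/-!
Summing the adjacency equations around the 6-cycle with alternating signs cancels all second
and third coordinates and leaves two cubic relations between the first coordinates.
Eliminating `b₁` from them gives the polynomial of the theorem times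
`(d₁ - x₁)(a₁ - w₁)(x₁ - y₁)`. These factors are nonzero: two vertices with a common
neighbour are determined by their first coordinates, and `d, x`, `a, w`, `x, y` are
distinct pairs at distance two on the cycle.
-/

section CubicAdj

variable {R : Type*} [CommRing R]

def CubicAdj (u v : R × R × R) : Prop :=
  u.2.1 + v.2.2 = u.1 * v.1 ^ 2 ∧ u.2.2 + v.2.1 = u.1 ^ 2 * v.1

theorem eq_of_cubicAdj_of_cubicAdj {u v w : R × R × R} (huv : CubicAdj u v)
    (hvw : CubicAdj v w) (h : u.1 = w.1) : u = w :=
  Prod.ext h <| Prod.ext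
    (by linear_combination huv.1 - hvw.2 + v.1 ^ 2 * h)
    (by linear_combination huv.2 - hvw.1 + v.1 * (u.1 + w.1) * h)

theorem cubicAdj_hexagon_relations {d a x w y b : R × R × R}
    (hda : CubicAdj d a) (hax : CubicAdj a x) (hxw : CubicAdj x w)
    (hwy : CubicAdj w y) (hyb : CubicAdj y b) (hbd : CubicAdj b d) :
    d.1 * a.1 ^ 2 - a.1 ^ 2 * x.1 + x.1 * w.1 ^ 2 - w.1 ^ 2 * y.1
        + y.1 * b.1 ^ 2 - b.1 ^ 2 * d.1 = 0 ∧
      d.1 ^ 2 * a.1 - a.1 * x.1 ^ 2 + x.1 ^ 2 * w.1 - w.1 * y.1 ^ 2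
        + y.1 ^ 2 * b.1 - b.1 * d.1 ^ 2 = 0 :=
  ⟨by linear_combination hax.2 - hda.1 + hwy.2 - hxw.1 + hbd.2 - hyb.1,
    by linear_combination hax.1 - hda.2 + hwy.1 - hxw.2 + hbd.1 - hyb.2⟩

end CubicAdj

theorem hexagon_polynomial_eq_zero {R : Type*} [CommRing R] [IsDomain R] {D A X W Y B : R}
    (h₁ : D * A ^ 2 - A ^ 2 * X + X * W ^ 2 - W ^ 2 * Y + Y * B ^ 2 - B ^ 2 * D = 0)
    (h₂ : D ^ 2 * A - A * X ^ 2 + X ^ 2 * W - W * Y ^ 2 + Y ^ 2 * B - B * D ^ 2 = 0)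
    (hDX : D ≠ X) (hAW : A ≠ W) (hXY : X ≠ Y) :
    D ^ 2 * A + D ^ 2 * W - D * A * X - D * A * Y + D * X * W + D * W * Y
      - A * X ^ 2 - A * X * Y - A * Y ^ 2 + X ^ 2 * W + X * W * Y - W * Y ^ 2 = 0 := by
  -- `B` occurs in `h₁` as `(Y - D) B²` and in `h₂` as `(Y² - D²) B`; this combination cancels it.
  have key : (D ^ 2 * A + D ^ 2 * W - D * A * X - D * A * Y + D * X * W + D * W * Y
      - A * X ^ 2 - A * X * Y - A * Y ^ 2 + X ^ 2 * W + X * W * Y - W * Y ^ 2)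
      * ((D - X) * (A - W) * (X - Y)) = 0 := by
    linear_combination (D ^ 2 * A - A * X ^ 2 + X ^ 2 * W - W * Y ^ 2
        - B * (Y ^ 2 - D ^ 2)) * h₂ - ((D - Y) * (D + Y) ^ 2) * h₁
  refine (mul_eq_zero.mp key).resolve_right ?_
  exact mul_ne_zero (mul_ne_zero (sub_ne_zero.mpr hDX) (sub_ne_zero.mpr hAW))
    (sub_ne_zero.mpr hXY)

theorem Gp.adj_iff {p : ℕ} {u v : Vsub p} :
    (Gp p).Adj u v ↔ u ≠ v ∧ CubicAdj u.val v.val :=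
  Iff.rfl

theorem Gp.fst_ne_of_adj_of_adj {p : ℕ} {u v w : Vsub p} (huv : (Gp p).Adj u v)
    (hvw : (Gp p).Adj v w) (huw : u ≠ w) : u.val.1 ≠ w.val.1 := fun h =>
  huw <| Subtype.ext <|
    eq_of_cubicAdj_of_cubicAdj (Gp.adj_iff.mp huv).2 (Gp.adj_iff.mp hvw).2 h

theorem stmt_4_general (p : ℕ) (hp : p.Prime)
    (d a x w y b : Vsub p)
    (hdist : [d, a, x, w, y, b].Pairwise (· ≠ ·))
    (hda : (Gp p).Adj d a) (hax : (Gp p).Adj a x) (hxw : (Gp p).Adj x w)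
    (hwy : (Gp p).Adj w y) (hyb : (Gp p).Adj y b) (hbd : (Gp p).Adj b d) :
    d.val.1 ^ 2 * a.val.1 + d.val.1 ^ 2 * w.val.1 - d.val.1 * a.val.1 * x.val.1
      - d.val.1 * a.val.1 * y.val.1 + d.val.1 * x.val.1 * w.val.1
      + d.val.1 * w.val.1 * y.val.1 - a.val.1 * x.val.1 ^ 2
      - a.val.1 * x.val.1 * y.val.1 - a.val.1 * y.val.1 ^ 2
      + x.val.1 ^ 2 * w.val.1 + x.val.1 * w.val.1 * y.val.1
      - w.val.1 * y.val.1 ^ 2 = 0 := by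
  have : Fact p.Prime := ⟨hp⟩
  have hdx : d ≠ x := List.rel_of_pairwise_cons hdist (by simp)
  have haw : a ≠ w := List.rel_of_pairwise_cons hdist.of_cons (by simp)
  have hxy : x ≠ y := List.rel_of_pairwise_cons hdist.of_cons.of_cons (by simp)
  obtain ⟨h₁, h₂⟩ := cubicAdj_hexagon_relations hda.2 hax.2 hxw.2 hwy.2 hyb.2 hbd.2
  exact hexagon_polynomial_eq_zero h₁ h₂ (Gp.fst_ne_of_adj_of_adj hda hax hdx)
    (Gp.fst_ne_of_adj_of_adj hax hxw haw) (Gp.fst_ne_of_adj_of_adj hxw hwy hxy)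

theorem stmt_4 (p : ℕ) (hp : p.Prime) (h5 : p % 6 = 5) (h11 : 11 < p)
    (d a x w y b : Vsub p)
    (hdist : [d, a, x, w, y, b].Pairwise (· ≠ ·))
    (hda : (Gp p).Adj d a) (hax : (Gp p).Adj a x) (hxw : (Gp p).Adj x w)
    (hwy : (Gp p).Adj w y) (hyb : (Gp p).Adj y b) (hbd : (Gp p).Adj b d) :
    d.val.1 ^ 2 * a.val.1 + d.val.1 ^ 2 * w.val.1 - d.val.1 * a.val.1 * x.val.1
      - d.val.1 * a.val.1 * y.val.1 + d.val.1 * x.val.1 * w.val.1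
      + d.val.1 * w.val.1 * y.val.1 - a.val.1 * x.val.1 ^ 2
      - a.val.1 * x.val.1 * y.val.1 - a.val.1 * y.val.1 ^ 2
      + x.val.1 ^ 2 * w.val.1 + x.val.1 * w.val.1 * y.val.1
      - w.val.1 * y.val.1 ^ 2 = 0 :=
  stmt_4_general p hp d a x w y b hdist hda hax hxw hwy hyb hbd
end

section
/- Let d, a, b, c, x, y, z, w ∈ V be pairwise distinct vertices such that da, db, dc, ax, by, cz, wx, wy, wz are all edges of G_p (so they form a copy of the theta graph θ_{3,3} with the three paths d–a–x–w, d–b–y–w, d–c–z–w). Then a₁·y₁ − a₁·z₁ − b₁·x₁ + b₁·z₁ + c₁·x₁ − c₁·y₁ = 0 in F_p. -/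
/-!
Along a path `d – t – s – w` of `G_p` the adjacency equations telescope, so that
`A = (d₁² - s₁²)(t₁ - w₁)` and `B = (d₁ - s₁)(t₁² - w₁²)` depend only on the end points `d, w`
(they are `pathInvariant₁ d w` and `pathInvariant₂ d w`); hence every path satisfies
`A (t₁ + w₁) = B (d₁ + s₁)`.
If `B ≠ 0`, the three points `(t₁, s₁)` of the three paths of the theta graph lie on one line,
which is the claimed vanishing of a determinant. If `B = 0`, then, since `t₁ + w₁ ≠ 0` on `S`,
every path has `s₁ = d₁` or `t₁ = w₁`; two of the three paths make the same choice, and two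
neighbours of a vertex with equal first coordinates coincide, against distinctness.
-/

lemma Svertex.add_ne_zero {p : ℕ} {α β : ZMod p} (hα : α ∈ Svertex p) (hβ : β ∈ Svertex p) :
    α + β ≠ 0 := by
  obtain ⟨hα₁, hα₂, -⟩ := hα
  obtain ⟨hβ₁, hβ₂, -⟩ := hβ
  intro h
  have hval := ZMod.val_add_of_lt (a := α) (b := β) (by omega)
  rw [h, ZMod.val_zero] at hval
  omega

lemma collinear_det_eq_zero {R : Type*} [CommRing R] [IsDomain R]
    {u v c e t₁ t₂ t₃ s₁ s₂ s₃ : R} (hv : v ≠ 0)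
    (h₁ : u * (t₁ + c) = v * (e + s₁)) (h₂ : u * (t₂ + c) = v * (e + s₂))
    (h₃ : u * (t₃ + c) = v * (e + s₃)) :
    t₁ * s₂ - t₁ * s₃ - t₂ * s₁ + t₂ * s₃ + t₃ * s₁ - t₃ * s₂ = 0 := by
  have h : v * (t₁ * s₂ - t₁ * s₃ - t₂ * s₁ + t₂ * s₃ + t₃ * s₁ - t₃ * s₂) = 0 := by
    linear_combination t₁ * (h₃ - h₂) + t₂ * (h₁ - h₃) + t₃ * (h₂ - h₁)
  exact (mul_eq_zero.mp h).resolve_left hv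

namespace Gp

variable {p : ℕ}

lemma eq_of_adj_of_adj_of_fst_eq {n u v : Vsub p} (hu : (Gp p).Adj n u) (hv : (Gp p).Adj n v)
    (h : u.val.1 = v.val.1) : u = v := by
  obtain ⟨-, hu₁, hu₂⟩ := hu
  obtain ⟨-, hv₁, hv₂⟩ := hv
  have h₂ : u.val.2.1 = v.val.2.1 := by linear_combination hu₂ - hv₂ + n.val.1 ^ 2 * h
  have h₃ : u.val.2.2 = v.val.2.2 := by
    linear_combination hu₁ - hv₁ + n.val.1 * (u.val.1 + v.val.1) * h
  exact Subtype.ext (Prod.ext h (Prod.ext h₂ h₃))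

def pathInvariant₁ (d w : Vsub p) : ZMod p := d.val.2.2 + w.val.2.1 - d.val.1 ^ 2 * w.val.1

def pathInvariant₂ (d w : Vsub p) : ZMod p := d.val.2.1 + w.val.2.2 - d.val.1 * w.val.1 ^ 2

section Path

variable {d t s w : Vsub p}

lemma sq_sub_sq_mul_sub_eq_pathInvariant₁
    (hdt : (Gp p).Adj d t) (hts : (Gp p).Adj t s) (hws : (Gp p).Adj w s) :
    (d.val.1 ^ 2 - s.val.1 ^ 2) * (t.val.1 - w.val.1) = pathInvariant₁ d w := by
  unfold pathInvariant₁
  linear_combination -hdt.2.2 + hts.2.1 - hws.2.1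

lemma sub_mul_sq_sub_sq_eq_pathInvariant₂
    (hdt : (Gp p).Adj d t) (hts : (Gp p).Adj t s) (hws : (Gp p).Adj w s) :
    (d.val.1 - s.val.1) * (t.val.1 ^ 2 - w.val.1 ^ 2) = pathInvariant₂ d w := by
  unfold pathInvariant₂
  linear_combination -hdt.2.1 + hts.2.2 - hws.2.2

lemma pathInvariant_mul_add
    (hdt : (Gp p).Adj d t) (hts : (Gp p).Adj t s) (hws : (Gp p).Adj w s) :
    pathInvariant₁ d w * (t.val.1 + w.val.1) = pathInvariant₂ d w * (d.val.1 + s.val.1) := by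
  rw [← sq_sub_sq_mul_sub_eq_pathInvariant₁ hdt hts hws,
    ← sub_mul_sq_sub_sq_eq_pathInvariant₂ hdt hts hws]
  ring

lemma fst_eq_or_fst_eq_of_pathInvariant₂_eq_zero [Fact p.Prime]
    (hdt : (Gp p).Adj d t) (hts : (Gp p).Adj t s) (hws : (Gp p).Adj w s)
    (h : pathInvariant₂ d w = 0) :
    s.val.1 = d.val.1 ∨ t.val.1 = w.val.1 := by
  have hsum : t.val.1 + w.val.1 ≠ 0 := Svertex.add_ne_zero t.property w.property
  have hprod : (d.val.1 - s.val.1) * (t.val.1 - w.val.1) * (t.val.1 + w.val.1) = 0 := by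
    rw [← h, ← sub_mul_sq_sub_sq_eq_pathInvariant₂ hdt hts hws]
    ring
  rcases mul_eq_zero.mp ((mul_eq_zero.mp hprod).resolve_right hsum) with hs | ht
  · exact .inl (sub_eq_zero.mp hs).symm
  · exact .inr (sub_eq_zero.mp ht)

end Path

end Gp

theorem stmt_5_general (p : ℕ) (hp : p.Prime)
    (d a b c x y z w : Vsub p)
    (hdist : [d, a, b, c, x, y, z, w].Pairwise (· ≠ ·))
    (hda : (Gp p).Adj d a) (hdb : (Gp p).Adj d b) (hdc : (Gp p).Adj d c)
    (hax : (Gp p).Adj a x) (hby : (Gp p).Adj b y) (hcz : (Gp p).Adj c z)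
    (hwx : (Gp p).Adj w x) (hwy : (Gp p).Adj w y) (hwz : (Gp p).Adj w z) :
    a.val.1 * y.val.1 - a.val.1 * z.val.1 - b.val.1 * x.val.1
      + b.val.1 * z.val.1 + c.val.1 * x.val.1 - c.val.1 * y.val.1 = 0 := by
  have : Fact p.Prime := ⟨hp⟩
  by_cases hB : Gp.pathInvariant₂ d w = 0
  · simp only [List.pairwise_cons, List.mem_cons, List.not_mem_nil, forall_eq_or_imp] at hdist
    obtain ⟨-, ⟨hab, hac, -⟩, ⟨hbc, -⟩, -, ⟨hxy, hxz, -⟩, ⟨hyz, -⟩, -⟩ := hdist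
    obtain hx | ha := Gp.fst_eq_or_fst_eq_of_pathInvariant₂_eq_zero hda hax hwx hB <;>
    obtain hy | hb := Gp.fst_eq_or_fst_eq_of_pathInvariant₂_eq_zero hdb hby hwy hB <;>
    obtain hz | hc := Gp.fst_eq_or_fst_eq_of_pathInvariant₂_eq_zero hdc hcz hwz hB
    all_goals first
      | exact absurd (Gp.eq_of_adj_of_adj_of_fst_eq hwx hwy (hx.trans hy.symm)) hxy
      | exact absurd (Gp.eq_of_adj_of_adj_of_fst_eq hwx hwz (hx.trans hz.symm)) hxz
      | exact absurd (Gp.eq_of_adj_of_adj_of_fst_eq hwy hwz (hy.trans hz.symm)) hyz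
      | exact absurd (Gp.eq_of_adj_of_adj_of_fst_eq hda hdb (ha.trans hb.symm)) hab
      | exact absurd (Gp.eq_of_adj_of_adj_of_fst_eq hda hdc (ha.trans hc.symm)) hac
      | exact absurd (Gp.eq_of_adj_of_adj_of_fst_eq hdb hdc (hb.trans hc.symm)) hbc
  · exact collinear_det_eq_zero hB (Gp.pathInvariant_mul_add hda hax hwx)
      (Gp.pathInvariant_mul_add hdb hby hwy) (Gp.pathInvariant_mul_add hdc hcz hwz)

theorem stmt_5 (p : ℕ) (hp : p.Prime) (h5 : p % 6 = 5) (h11 : 11 < p)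
    (d a b c x y z w : Vsub p)
    (hdist : [d, a, b, c, x, y, z, w].Pairwise (· ≠ ·))
    (hda : (Gp p).Adj d a) (hdb : (Gp p).Adj d b) (hdc : (Gp p).Adj d c)
    (hax : (Gp p).Adj a x) (hby : (Gp p).Adj b y) (hcz : (Gp p).Adj c z)
    (hwx : (Gp p).Adj w x) (hwy : (Gp p).Adj w y) (hwz : (Gp p).Adj w z) :
    a.val.1 * y.val.1 - a.val.1 * z.val.1 - b.val.1 * x.val.1
      + b.val.1 * z.val.1 + c.val.1 * x.val.1 - c.val.1 * y.val.1 = 0 :=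
  stmt_5_general p hp d a b c x y z w hdist hda hdb hdc hax hby hcz hwx hwy hwz
end
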